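/- Let Γ be a locally compact, first-countable, Hausdorff topological group which is compactly generated, with compact generating set S. Then there exists a metric ρ on Γ such that: (i) ρ is left-invariant (ρ(gx, gy) = ρ(x,y) for all g, x, y ∈ Γ); (ii) ρ induces the given topology of Γ; (iii) (Γ, ρ) is coarse geodesic; and (iv) ρ is quasi-isometric to the word metric of S, i.e. there exist L ≥ 1, C ≥ 0 with (1/L)·ℓ_S(x⁻¹y) − C ≤ ρ(x,y) ≤ L·ℓ_S(x⁻¹y) + C for all x, y ∈ Γ. -/

import Mathlib

open Pointwise

/-- `S` generates the group `G`: every element is a finite product of elements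
of `S ∪ S⁻¹`. -/
def GeneratesGroup {G : Type*} [Group G] (S : Set G) : Prop :=
  ∀ g : G, ∃ (n : ℕ) (f : Fin n → G), (∀ i, f i ∈ S ∪ S⁻¹) ∧ (List.ofFn f).prod = g

/-- The word length of `g` with respect to a generating set `S`: the least `n`
such that `g` is a product of `n` elements of `S ∪ S⁻¹`. -/
noncomputable def wordLength {G : Type*} [Group G] (S : Set G) (g : G) : ℕ :=
  sInf {n : ℕ | ∃ f : Fin n → G, (∀ i, f i ∈ S ∪ S⁻¹) ∧ (List.ofFn f).prod = g}

/-- A distance function `ρ` on `X` is coarse geodesic if for some `C ≥ 0` any two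
points are joined by a `C`-coarse geodesic. -/
def CoarseGeodesicDist {X : Type*} (ρ : X → X → ℝ) : Prop :=
  ∃ C : ℝ, 0 ≤ C ∧ ∀ x y : X, ∃ (n : ℕ) (p : Fin (n + 1) → X),
    p 0 = x ∧ p (Fin.last n) = y ∧
    (∀ i : Fin n, ρ (p i.castSucc) (p i.succ) ≤ C) ∧
    (∑ i : Fin n, ρ (p i.castSucc) (p i.succ)) = ρ x y

open Filter Topology

section WL
variable {G : Type*} [Group G] {S : Set G}

lemma wl_set_eq (g : G) (n : ℕ) :
    (∃ f : Fin n → G, (∀ i, f i ∈ S ∪ S⁻¹) ∧ (List.ofFn f).prod = g) ↔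
      (∃ l : List G, l.length = n ∧ (∀ x ∈ l, x ∈ S ∪ S⁻¹) ∧ l.prod = g) := by
  constructor
  · rintro ⟨f, hf, hprod⟩
    refine ⟨List.ofFn f, by simp, ?_, hprod⟩
    intro x hx
    rw [List.mem_ofFn] at hx
    obtain ⟨i, rfl⟩ := hx
    exact hf i
  · rintro ⟨l, hlen, hmem, hprod⟩
    subst hlen
    exact ⟨l.get, fun i => hmem _ (l.get_mem i), by rw [List.ofFn_get]; exact hprod⟩

lemma wordLength_le_length (l : List G) (h : ∀ x ∈ l, x ∈ S ∪ S⁻¹) :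
    wordLength S l.prod ≤ l.length :=
  Nat.sInf_le ((wl_set_eq _ _).2 ⟨l, rfl, h, rfl⟩)

lemma exists_word (hSgen : GeneratesGroup S) (g : G) :
    ∃ l : List G, l.length = wordLength S g ∧ (∀ x ∈ l, x ∈ S ∪ S⁻¹) ∧ l.prod = g := by
  have hne : {n : ℕ | ∃ f : Fin n → G, (∀ i, f i ∈ S ∪ S⁻¹) ∧ (List.ofFn f).prod = g}.Nonempty := by
    obtain ⟨n, f, h1, h2⟩ := hSgen g
    exact ⟨n, f, h1, h2⟩
  have := Nat.sInf_mem hne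
  exact (wl_set_eq g _).1 this

lemma mem_symm_inv {x : G} (h : x ∈ S ∪ S⁻¹) : x⁻¹ ∈ S ∪ S⁻¹ := by
  rcases h with h | h
  · exact Or.inr (by simpa using h)
  · exact Or.inl (by simpa using h)

lemma wordLength_one : wordLength S (1 : G) = 0 :=
  Nat.le_zero.1 (by simpa using wordLength_le_length ([] : List G) (by simp))

lemma wordLength_mul_le (hSgen : GeneratesGroup S) (g h : G) :
    wordLength S (g * h) ≤ wordLength S g + wordLength S h := by
  obtain ⟨l1, hl1, hm1, hp1⟩ := exists_word hSgen g
  obtain ⟨l2, hl2, hm2, hp2⟩ := exists_word hSgen h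
  have := wordLength_le_length (S := S) (l1 ++ l2) (by
    intro x hx; rcases List.mem_append.1 hx with hx | hx
    exacts [hm1 x hx, hm2 x hx])
  simpa [hp1, hp2, hl1, hl2] using this

lemma wordLength_inv_le (hSgen : GeneratesGroup S) (g : G) :
    wordLength S g⁻¹ ≤ wordLength S g := by
  obtain ⟨l, hl, hm, hp⟩ := exists_word hSgen g
  have := wordLength_le_length (S := S) ((l.map fun x => x⁻¹).reverse) (by
    intro x hx
    rw [List.mem_reverse, List.mem_map] at hx
    obtain ⟨u, hu, rfl⟩ := hx
    exact mem_symm_inv (hm u hu))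
  rw [← List.prod_inv_reverse, hp] at this
  simpa [hl] using this

lemma wordLength_prod_le (hSgen : GeneratesGroup S) (M : ℕ) :
    ∀ l : List G, (∀ x ∈ l, wordLength S x ≤ M) → wordLength S l.prod ≤ M * l.length := by
  intro l
  induction l with
  | nil => simp [wordLength_one]
  | cons a l ih =>
    intro h
    have h1 := h a (by simp)
    have h2 := ih fun x hx => h x (by simp [hx])
    calc wordLength S (a :: l).prod ≤ wordLength S a + wordLength S l.prod := by
          rw [List.prod_cons]; exact wordLength_mul_le hSgen _ _
      _ ≤ M + M * l.length := add_le_add h1 h2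
      _ = M * (a :: l).length := by rw [List.length_cons]; ring

end WL

section BK
variable {Γ : Type*} [Group Γ] [TopologicalSpace Γ] [IsTopologicalGroup Γ]
  [FirstCountableTopology Γ]

lemma exists_nbhd_seq :
    ∃ U : ℕ → Set Γ, (∀ n, U n ∈ 𝓝 (1 : Γ)) ∧ (∀ n, U n = (U n)⁻¹) ∧ Antitone U ∧
      (∀ n, U (n + 1) * U (n + 1) * U (n + 1) ⊆ U n) ∧
      (∀ V ∈ 𝓝 (1 : Γ), ∃ n, U n ⊆ V) := by
  obtain ⟨B, hB⟩ := (𝓝 (1 : Γ)).exists_antitone_basis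
  have hBmem : ∀ n, B n ∈ 𝓝 (1 : Γ) := fun n => hB.mem n
  have key : ∀ V : Set Γ, ∃ W : Set Γ,
      W ∈ 𝓝 (1 : Γ) ∧ W = W⁻¹ ∧ (V ∈ 𝓝 (1 : Γ) → W * W * W ⊆ V) := by
    intro V
    by_cases hV : V ∈ 𝓝 (1 : Γ)
    · obtain ⟨V1, hV1o, hV11, hV1⟩ := exists_open_nhds_one_mul_subset hV
      obtain ⟨V2, hV2o, hV21, hV2⟩ :=
        exists_open_nhds_one_mul_subset (hV1o.mem_nhds hV11)
      refine ⟨V2 ∩ V2⁻¹, ?_, ?_, fun _ => ?_⟩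
      · exact Filter.inter_mem (hV2o.mem_nhds hV21)
          ((hV2o.inv.mem_nhds) (by simpa using hV21))
      · simp [Set.inter_comm]
      · have h1 : V2 ∩ V2⁻¹ ⊆ V2 := Set.inter_subset_left
        have hsub : V2 ⊆ V1 := fun x hx => hV2 ⟨x, hx, 1, hV21, mul_one x⟩
        calc (V2 ∩ V2⁻¹) * (V2 ∩ V2⁻¹) * (V2 ∩ V2⁻¹)
            ⊆ V2 * V2 * V2 := by
              exact Set.mul_subset_mul (Set.mul_subset_mul h1 h1) h1
          _ ⊆ V1 * V1 := Set.mul_subset_mul hV2 hsub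
          _ ⊆ V := hV1
    · exact ⟨Set.univ, Filter.univ_mem, by simp, fun h => absurd h hV⟩
  choose W hWmem hWsymm hWcube using key
  set U : ℕ → Set Γ := fun n => Nat.rec Set.univ (fun n Un => W (Un ∩ B n)) n with hU
  have hUmem : ∀ n, U n ∈ 𝓝 (1 : Γ) := by
    intro n
    cases n with
    | zero => exact Filter.univ_mem
    | succ n => exact hWmem _
  have hUsymm : ∀ n, U n = (U n)⁻¹ := by
    intro n
    cases n with
    | zero => simp [hU]
    | succ n => exact hWsymm _
  have hUcube : ∀ n, U (n + 1) * U (n + 1) * U (n + 1) ⊆ U n ∩ B n := by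
    intro n
    exact hWcube _ (Filter.inter_mem (hUmem n) (hBmem n))
  have hone : ∀ n, (1 : Γ) ∈ U n := fun n => mem_of_mem_nhds (hUmem n)
  have hUsucc : ∀ n, U (n + 1) ⊆ U n := by
    intro n x hx
    have : x ∈ U (n + 1) * U (n + 1) * U (n + 1) :=
      ⟨x * 1, ⟨x, hx, 1, hone (n+1), rfl⟩, 1, hone (n+1), by simp⟩
    exact (hUcube n this).1
  refine ⟨U, hUmem, hUsymm, antitone_nat_of_succ_le hUsucc, fun n => (hUcube n).trans
    Set.inter_subset_left, ?_⟩
  intro V hV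
  obtain ⟨n, -, hn⟩ := hB.toHasBasis.mem_iff.1 hV
  refine ⟨n + 1, fun x hx => hn ?_⟩
  have : x ∈ U (n + 1) * U (n + 1) * U (n + 1) :=
    ⟨x * 1, ⟨x, hx, 1, hone (n+1), rfl⟩, 1, hone (n+1), by simp⟩
  exact (hUcube n this).2

open NNReal in
lemma exists_inv_metric :
    ∃ (U : ℕ → Set Γ) (d : Γ → Γ → ℝ),
      (∀ n, U n ∈ 𝓝 (1 : Γ)) ∧ Antitone U ∧ (∀ V ∈ 𝓝 (1 : Γ), ∃ n, U n ⊆ V) ∧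
      (∀ x, d x x = 0) ∧ (∀ x y, 0 ≤ d x y) ∧ (∀ x y, d x y = d y x) ∧
      (∀ x y z, d x z ≤ d x y + d y z) ∧ (∀ g x y, d (g * x) (g * y) = d x y) ∧
      (∀ n (x y : Γ), x⁻¹ * y ∈ U n → d x y ≤ (1 / 2 : ℝ) ^ n) ∧
      (∀ n (x y : Γ), d x y < (1 / 2 : ℝ) ^ (n + 1) → x⁻¹ * y ∈ U n) := by
  classical
  obtain ⟨U, hUmem, hUsymm, hUanti, hUcube, hUbasis⟩ := exists_nbhd_seq (Γ := Γ)
  have hone : ∀ n, (1 : Γ) ∈ U n := fun n => mem_of_mem_nhds (hUmem n)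
  set d₀ : Γ → ℝ≥0 := fun g => if h : ∃ n, g ∉ U n then (1 / 2) ^ Nat.find h else 0 with hd₀def
  set D : Γ → Γ → ℝ≥0 := fun x y => d₀ (x⁻¹ * y) with hDdef
  have hr : (0 : ℝ≥0) < 1 / 2 ∧ (1 / 2 : ℝ≥0) < 1 :=
    ⟨half_pos one_pos, NNReal.half_lt_self one_ne_zero⟩
  have hd₀_one : d₀ 1 = 0 := by
    rw [hd₀def]
    simp only [dif_neg]
    rw [dif_neg]
    push_neg
    exact fun n => hone n
  have hD_self : ∀ x : Γ, D x x = 0 := fun x => by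
    simp only [hDdef, inv_mul_cancel, hd₀_one]
  have hd₀_inv : ∀ g : Γ, d₀ g⁻¹ = d₀ g := by
    intro g
    have hmem : ∀ n, g⁻¹ ∈ U n ↔ g ∈ U n := by
      intro n
      constructor
      · intro h; rw [hUsymm n] at h; simpa using h
      · intro h; rw [hUsymm n]; simpa using h
    have hiff : ∀ n, (g⁻¹ ∉ U n) ↔ (g ∉ U n) := fun n => not_congr (hmem n)
    simp only [hd₀def]
    by_cases h : ∃ n, g ∉ U n
    · have h' : ∃ n, g⁻¹ ∉ U n := by
        obtain ⟨n, hn⟩ := h; exact ⟨n, (hiff n).2 hn⟩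
      rw [dif_pos h', dif_pos h]
      congr 1
      refine le_antisymm (Nat.find_le ?_) (Nat.find_le ?_)
      · exact (hiff _).2 (Nat.find_spec h)
      · exact (hiff _).1 (Nat.find_spec h')
    · have h' : ¬ ∃ n, g⁻¹ ∉ U n := by
        rintro ⟨n, hn⟩; exact h ⟨n, fun hc => hn ((hmem n).2 hc)⟩
      rw [dif_neg h', dif_neg h]
  have hD_symm : ∀ x y : Γ, D x y = D y x := by
    intro x y
    have : (y⁻¹ * x) = (x⁻¹ * y)⁻¹ := by group
    rw [hDdef]
    simp only [this, hd₀_inv]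
  have hle_d : ∀ {g : Γ} {n : ℕ}, (1 / 2 : ℝ≥0) ^ n ≤ d₀ g ↔ g ∉ U n := by
    intro g n
    simp only [hd₀def]
    split_ifs with h
    · rw [(pow_right_strictAnti₀ hr.1 hr.2).le_iff_ge, Nat.find_le_iff]
      constructor
      · rintro ⟨m, hmn, hm⟩ hn
        exact hm (hUanti hmn hn)
      · exact fun h' => ⟨n, le_rfl, h'⟩
    · push_neg at h
      simp only [h, not_true, (pow_pos hr.1 _).not_ge, iff_false, not_not]
  have hquad : ∀ x₁ x₂ x₃ x₄ : Γ, D x₁ x₄ ≤ 2 * max (D x₁ x₂) (max (D x₂ x₃) (D x₃ x₄)) := by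
    intro x₁ x₂ x₃ x₄
    by_cases H : ∃ n, (x₁⁻¹ * x₄) ∉ U n
    · have hDeq : D x₁ x₄ = (1 / 2 : ℝ≥0) ^ Nat.find H := by
        simp only [hDdef, hd₀def, dif_pos H]
      rw [hDeq]
      rw [← div_le_iff₀' zero_lt_two, ← mul_one_div ((1 / 2 : ℝ≥0) ^ _), ← pow_succ]
      simp only [le_max_iff, hDdef, hle_d, ← not_and_or]
      rintro ⟨h₁₂, h₂₃, h₃₄⟩
      refine Nat.find_spec H ?_
      have hin : (x₁⁻¹ * x₂) * (x₂⁻¹ * x₃) * (x₃⁻¹ * x₄) ∈ U (Nat.find H) :=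
        hUcube _ (Set.mul_mem_mul (Set.mul_mem_mul h₁₂ h₂₃) h₃₄)
      simpa [mul_assoc] using hin
    · have hDeq : D x₁ x₄ = 0 := by simp only [hDdef, hd₀def, dif_neg H]
      rw [hDeq]
      exact zero_le
  letI I := PseudoMetricSpace.ofPreNNDist D hD_self hD_symm
  set d : Γ → Γ → ℝ := fun x y => @dist Γ I.toDist x y with hddef
  have hd_le_D : ∀ x y : Γ, d x y ≤ D x y :=
    PseudoMetricSpace.dist_ofPreNNDist_le D hD_self hD_symm
  have hD_le_d : ∀ x y : Γ, (D x y : ℝ) ≤ 2 * d x y :=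
    PseudoMetricSpace.le_two_mul_dist_ofPreNNDist D hD_self hD_symm hquad
  have hd_inv : ∀ g x y : Γ, d (g * x) (g * y) = d x y := by
    intro g x y
    rw [hddef]
    simp only
    rw [PseudoMetricSpace.dist_ofPreNNDist, PseudoMetricSpace.dist_ofPreNNDist]
    rw [NNReal.coe_inj]
    have hsurj : Function.Surjective (fun l : List Γ => l.map (g⁻¹ * ·)) := by
      intro l
      refine ⟨l.map (g * ·), ?_⟩
      simp [List.map_map, Function.comp_def]
    have hDinv : ∀ a b : Γ, D (g⁻¹ * a) (g⁻¹ * b) = D a b := by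
      intro a b
      simp only [hDdef]
      congr 1
      group
    have hzip : ∀ (L1 L2 : List Γ),
        List.zipWith D (L1.map (g⁻¹ * ·)) (L2.map (g⁻¹ * ·)) = List.zipWith D L1 L2 := by
      intro L1
      induction L1 with
      | nil => intro L2; simp
      | cons a L1 ih =>
        intro L2
        cases L2 with
        | nil => simp
        | cons b L2 => simp only [List.map_cons, List.zipWith_cons_cons, ih, hDinv]
    refine hsurj.iInf_congr _ fun l => ?_
    have h1 : (x :: (l.map (g⁻¹ * ·))) = ((g * x) :: l).map (g⁻¹ * ·) := by
      rw [List.map_cons, inv_mul_cancel_left]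
    have h2 : (l.map (g⁻¹ * ·)) ++ [y] = (l ++ [g * y]).map (g⁻¹ * ·) := by
      rw [List.map_append, List.map_cons, List.map_nil, inv_mul_cancel_left]
    rw [h1, h2, hzip]
  refine ⟨U, d, hUmem, hUanti, hUbasis, ?_, ?_, ?_, ?_, hd_inv, ?_, ?_⟩
  · intro x; exact @dist_self Γ I x
  · intro x y; exact @dist_nonneg Γ I x y
  · intro x y; exact @dist_comm Γ I x y
  · intro x y z; exact @dist_triangle Γ I x y z
  · intro n x y hmem
    refine (hd_le_D x y).trans ?_
    have : D x y ≤ (1 / 2 : ℝ≥0) ^ n := by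
      by_contra hcon
      push_neg at hcon
      exact (hle_d.1 hcon.le) hmem
    calc (D x y : ℝ) ≤ ((1 / 2 : ℝ≥0) ^ n : ℝ≥0) := NNReal.coe_le_coe.2 this
      _ = (1 / 2 : ℝ) ^ n := by push_cast; norm_num
  · intro n x y hlt
    by_contra hmem
    have h1 : (1 / 2 : ℝ≥0) ^ n ≤ D x y := hle_d.2 hmem
    have h2 : ((1 / 2 : ℝ≥0) ^ n : ℝ) ≤ 2 * d x y := le_trans (NNReal.coe_le_coe.2 h1) (hD_le_d x y)
    have h3 : ((1 / 2 : ℝ≥0) ^ n : ℝ) = (1 / 2 : ℝ) ^ n := by push_cast; norm_num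
    rw [h3] at h2
    have : (1 / 2 : ℝ) ^ n < 2 * ((1 / 2 : ℝ) ^ (n + 1)) := lt_of_le_of_lt h2 (by linarith)
    rw [pow_succ] at this
    linarith

end BK

lemma le_of_forall_pos_le_add' {a b : ℝ} (H : ∀ ε : ℝ, 0 < ε → a ≤ b + ε) : a ≤ b := by
  by_contra h
  push_neg at h
  have := H ((a - b) / 2) (by linarith)
  linarith

lemma list_toFun {α : Type*} (l : List α) (N : ℕ) (h : l.length = N) :
    ∃ v : Fin N → α, List.ofFn v = l := by
  subst h
  exact ⟨l.get, List.ofFn_get l⟩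

lemma min_add_min_le {x y t : ℝ} (hx : 0 ≤ x) (hy : 0 ≤ y) (ht : 0 ≤ t) :
    min (x + y) t ≤ min x t + min y t := by
  rcases le_total t x with h | h
  · have h1 : min x t = t := min_eq_right h
    have h2 : 0 ≤ min y t := le_min hy ht
    have h3 : min (x + y) t ≤ t := min_le_right _ _
    linarith
  · rcases le_total t y with h' | h'
    · have h1 : min y t = t := min_eq_right h'
      have h2 : 0 ≤ min x t := le_min hx ht
      have h3 : min (x + y) t ≤ t := min_le_right _ _
      linarith
    · have h1 : min x t = x := min_eq_left h
      have h2 : min y t = y := min_eq_left h'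
      have h3 : min (x + y) t ≤ x + y := min_le_left _ _
      linarith

set_option maxHeartbeats 1000000 in
theorem statement7
    {Γ : Type*} [Group Γ] [TopologicalSpace Γ] [IsTopologicalGroup Γ]
    [LocallyCompactSpace Γ] [FirstCountableTopology Γ] [T2Space Γ]
    (S : Set Γ) (hS : IsCompact S) (hSgen : GeneratesGroup S) :
    ∃ ρ : Γ → Γ → ℝ,
      (∀ x y : Γ, ρ x y = 0 ↔ x = y) ∧
      (∀ x y : Γ, ρ x y = ρ y x) ∧
      (∀ x y z : Γ, ρ x z ≤ ρ x y + ρ y z) ∧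
      (∀ g x y : Γ, ρ (g * x) (g * y) = ρ x y) ∧
      (∀ s : Set Γ, IsOpen s ↔ ∀ x ∈ s, ∃ ε : ℝ, 0 < ε ∧ ∀ y : Γ, ρ x y < ε → y ∈ s) ∧
      CoarseGeodesicDist ρ ∧
      (∃ L : ℝ, 1 ≤ L ∧ ∃ C : ℝ, 0 ≤ C ∧ ∀ x y : Γ,
        (1 / L) * (wordLength S (x⁻¹ * y) : ℝ) - C ≤ ρ x y ∧
        ρ x y ≤ L * (wordLength S (x⁻¹ * y) : ℝ) + C) := by
  classical
  obtain ⟨U, d, hUmem, hUanti, hUbasis, hd_self, hd_nonneg, hd_symm, hd_tri, hd_inv,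
    hd_le, hd_sep⟩ := exists_inv_metric (Γ := Γ)
  -- distance from 1
  have hd1_inv : ∀ u : Γ, d 1 u⁻¹ = d 1 u := by
    intro u
    have h1 : d (u * 1) (u * u⁻¹) = d 1 u⁻¹ := hd_inv u 1 u⁻¹
    have h2 : d (u * 1) (u * u⁻¹) = d u 1 := by rw [mul_one, mul_inv_cancel]
    rw [← h1, h2, hd_symm]
  have hd1_mul : ∀ u v : Γ, d 1 (u * v) ≤ d 1 u + d 1 v := by
    intro u v
    have : d u (u * v) = d 1 v := by
      have := hd_inv u 1 v
      rwa [mul_one] at this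
    calc d 1 (u * v) ≤ d 1 u + d u (u * v) := hd_tri _ _ _
      _ = d 1 u + d 1 v := by rw [this]
  -- continuity of d 1 ·
  have hmem_nhds : ∀ (x : Γ) (n : ℕ), {y : Γ | x⁻¹ * y ∈ U n} ∈ 𝓝 x := by
    intro x n
    have hc : Continuous fun y : Γ => x⁻¹ * y := continuous_const.mul continuous_id
    have : (fun y : Γ => x⁻¹ * y) ⁻¹' (U n) ∈ 𝓝 x := by
      apply hc.continuousAt.preimage_mem_nhds
      rw [inv_mul_cancel]
      exact hUmem n
    exact this
  have hcont_d1 : Continuous fun g : Γ => d 1 g := by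
    rw [continuous_iff_continuousAt]
    intro g₀
    rw [ContinuousAt, Metric.tendsto_nhds]
    intro ε hε
    obtain ⟨n, hn⟩ := exists_pow_lt_of_lt_one hε (by norm_num : (1 / 2 : ℝ) < 1)
    filter_upwards [hmem_nhds g₀ n] with y hy
    have hdy : d g₀ y ≤ (1 / 2 : ℝ) ^ n := hd_le n g₀ y hy
    have h1 : d 1 y ≤ d 1 g₀ + d g₀ y := hd_tri _ _ _
    have h2 : d 1 g₀ ≤ d 1 y + d g₀ y := by
      calc d 1 g₀ ≤ d 1 y + d y g₀ := hd_tri _ _ _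
        _ = d 1 y + d g₀ y := by rw [hd_symm y g₀]
    rw [Real.dist_eq, abs_lt]
    constructor <;> nlinarith
  -- compact closure of a small neighborhood
  obtain ⟨Kc, hKc_comp, hKc_mem⟩ := exists_compact_mem_nhds (1 : Γ)
  obtain ⟨m, hm⟩ := hUbasis Kc hKc_mem
  set Q : Set Γ := closure (U m) with hQdef
  have hQ_comp : IsCompact Q :=
    hKc_comp.of_isClosed_subset isClosed_closure (closure_minimal hm hKc_comp.isClosed)
  set K : Set Γ := (S ∪ S⁻¹) ∪ (Q ∪ Q⁻¹) with hKdef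
  have hK_comp : IsCompact K :=
    ((hS.union hS.inv).union (hQ_comp.union hQ_comp.inv))
  have hUmK : U m ⊆ K := fun x hx => Or.inr (Or.inl (subset_closure hx))
  have hK_symm : ∀ g ∈ K, g⁻¹ ∈ K := by
    intro g hg
    rcases hg with (h | h) | (h | h)
    · exact Or.inl (Or.inr (by simpa using h))
    · exact Or.inl (Or.inl (by simpa using h))
    · exact Or.inr (Or.inr (by simpa using h))
    · exact Or.inr (Or.inl (by simpa using h))
  have h1U : ∀ n, (1 : Γ) ∈ U n := fun n => mem_of_mem_nhds (hUmem n)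
  have h1K : (1 : Γ) ∈ K := hUmK (h1U m)
  have hSK : S ∪ S⁻¹ ⊆ K := fun x hx => Or.inl hx
  -- the cost function
  set t : ℝ := (1 / 2 : ℝ) ^ (m + 3) with htdef
  have ht : 0 < t := by positivity
  have ht1 : t ≤ 1 := by
    rw [htdef]
    calc (1 / 2 : ℝ) ^ (m + 3) ≤ (1 / 2 : ℝ) ^ 0 :=
      pow_le_pow_of_le_one (by norm_num) (by norm_num) (Nat.zero_le _)
    _ = 1 := pow_zero _
  have htm : t < (1 / 2 : ℝ) ^ (m + 1) := by
    rw [htdef]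
    exact pow_lt_pow_right_of_lt_one₀ (by norm_num) (by norm_num) (by omega)
  set c : Γ → ℝ := fun g => min (d 1 g) t with hcdef
  have hc_nonneg : ∀ g, 0 ≤ c g := fun g => le_min (hd_nonneg 1 g) ht.le
  have hc_le_t : ∀ g, c g ≤ t := fun g => min_le_right _ _
  have hc_one : c 1 = 0 := by
    simp only [hcdef, hd_self, min_eq_left ht.le]
  have hc_inv : ∀ g, c g⁻¹ = c g := fun g => by simp only [hcdef, hd1_inv]
  have hc_mul : ∀ u v : Γ, c (u * v) ≤ c u + c v := by
    intro u v
    calc c (u * v) ≤ min (d 1 u + d 1 v) t :=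
      min_le_min (hd1_mul u v) le_rfl
    _ ≤ c u + c v := min_add_min_le (hd_nonneg _ _) (hd_nonneg _ _) ht.le
  have hc_lt_d : ∀ g, c g < t → d 1 g = c g := by
    intro g h
    rcases min_cases (d 1 g) t with ⟨h1, _⟩ | ⟨h1, h2⟩
    · exact h1.symm
    · rw [hcdef] at h ⊢
      simp only at h ⊢
      rw [h1] at h
      linarith
  have hsmallK : ∀ g : Γ, d 1 g < (1 / 2 : ℝ) ^ (m + 1) → g ∈ K := by
    intro g hg
    have := hd_sep m 1 g (by simpa using hg)
    simpa using hUmK this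
  have hcont_c : Continuous c := hcont_d1.min continuous_const
  -- chains
  set cost : List Γ → ℝ := fun l => (l.map c).sum with hcostdef
  have hcost_nonneg : ∀ l, 0 ≤ cost l := by
    intro l
    apply List.sum_nonneg
    intro r hr
    rw [List.mem_map] at hr
    obtain ⟨u, _, rfl⟩ := hr
    exact hc_nonneg u
  have hcost_append : ∀ l1 l2, cost (l1 ++ l2) = cost l1 + cost l2 := by
    intro l1 l2
    simp [hcostdef]
  have hcost_cons : ∀ a l, cost (a :: l) = c a + cost l := by
    intro a l
    simp [hcostdef]
  set chainSet : Γ → Set ℝ := fun g =>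
    {r | ∃ l : List Γ, (∀ u ∈ l, u ∈ K) ∧ l.prod = g ∧ cost l = r} with hchaindef
  have hchain_ne : ∀ g, (chainSet g).Nonempty := by
    intro g
    obtain ⟨l, -, hmem, hprod⟩ := exists_word hSgen g
    exact ⟨cost l, l, fun u hu => hSK (hmem u hu), hprod, rfl⟩
  have hbdd : ∀ g, BddBelow (chainSet g) := by
    intro g
    refine ⟨0, ?_⟩
    rintro r ⟨l, -, -, rfl⟩
    exact hcost_nonneg l
  set φ : Γ → ℝ := fun g => sInf (chainSet g) with hφdef
  set ρ : Γ → Γ → ℝ := fun x y => φ (x⁻¹ * y) with hρdef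
  have hφ_le : ∀ (g : Γ) (l : List Γ), (∀ u ∈ l, u ∈ K) → l.prod = g → φ g ≤ cost l :=
    fun g l h1 h2 => csInf_le (hbdd g) ⟨l, h1, h2, rfl⟩
  have hφ_nonneg : ∀ g, 0 ≤ φ g := by
    intro g
    apply le_csInf (hchain_ne g)
    rintro r ⟨l, -, -, rfl⟩
    exact hcost_nonneg l
  have hφ_eps : ∀ (g : Γ) (ε : ℝ), 0 < ε →
      ∃ l : List Γ, (∀ u ∈ l, u ∈ K) ∧ l.prod = g ∧ cost l < φ g + ε := by
    intro g ε hε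
    obtain ⟨r, ⟨l, h1, h2, rfl⟩, hr⟩ := Real.lt_sInf_add_pos (hchain_ne g) hε
    exact ⟨l, h1, h2, hr⟩
  have hφ_one : φ 1 = 0 := by
    refine le_antisymm ?_ (hφ_nonneg 1)
    have := hφ_le 1 [] (by simp) (by simp)
    simpa [hcostdef] using this
  have hφ_mul : ∀ g h : Γ, φ (g * h) ≤ φ g + φ h := by
    intro g h
    apply le_of_forall_pos_le_add'
    intro ε hε
    obtain ⟨l1, ha1, hb1, hc1⟩ := hφ_eps g (ε / 2) (by linarith)
    obtain ⟨l2, ha2, hb2, hc2⟩ := hφ_eps h (ε / 2) (by linarith)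
    have := hφ_le (g * h) (l1 ++ l2) (by
      intro u hu
      rcases List.mem_append.1 hu with hu | hu
      exacts [ha1 u hu, ha2 u hu]) (by rw [List.prod_append, hb1, hb2])
    rw [hcost_append] at this
    linarith
  have hφ_inv_le : ∀ g : Γ, φ g⁻¹ ≤ φ g := by
    intro g
    apply le_csInf (hchain_ne g)
    rintro r ⟨l, h1, h2, rfl⟩
    have hmem : ∀ u ∈ (l.map fun x => x⁻¹).reverse, u ∈ K := by
      intro u hu
      rw [List.mem_reverse, List.mem_map] at hu
      obtain ⟨v, hv, rfl⟩ := hu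
      exact hK_symm v (h1 v hv)
    have hprod : ((l.map fun x => x⁻¹).reverse).prod = g⁻¹ := by
      rw [← List.prod_inv_reverse, h2]
    have hcosteq : cost ((l.map fun x => x⁻¹).reverse) = cost l := by
      simp only [hcostdef]
      rw [List.map_reverse, List.sum_reverse, List.map_map]
      congr 1
      apply List.map_congr_left
      intro u _
      exact hc_inv u
    calc φ g⁻¹ ≤ cost ((l.map fun x => x⁻¹).reverse) := hφ_le _ _ hmem hprod
      _ = cost l := hcosteq
  have hφ_inv : ∀ g : Γ, φ g⁻¹ = φ g := by
    intro g
    refine le_antisymm (hφ_inv_le g) ?_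
    have := hφ_inv_le g⁻¹
    rwa [inv_inv] at this
  have hφ_lower : ∀ g : Γ, min (d 1 g) t ≤ φ g := by
    intro g
    apply le_csInf (hchain_ne g)
    rintro r ⟨l, -, h2, rfl⟩
    subst h2
    induction l with
    | nil => simp [hcostdef, hd_self, min_eq_left ht.le]
    | cons a l ih =>
      rw [hcost_cons, List.prod_cons]
      calc min (d 1 (a * l.prod)) t ≤ min (d 1 a + d 1 l.prod) t :=
        min_le_min (hd1_mul a l.prod) le_rfl
      _ ≤ min (d 1 a) t + min (d 1 l.prod) t :=
        min_add_min_le (hd_nonneg _ _) (hd_nonneg _ _) ht.le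
      _ ≤ c a + cost l := by
          refine add_le_add le_rfl ?_
          exact ih
  have hφ_le_c : ∀ g ∈ K, φ g ≤ c g := by
    intro g hg
    have := hφ_le g [g] (by simpa using hg) (by simp)
    simpa [hcostdef] using this
  have hφ_pos : ∀ g : Γ, g ≠ 1 → 0 < φ g := by
    intro g hg
    have hd_pos : 0 < d 1 g := by
      have hgc : ({g}ᶜ : Set Γ) ∈ 𝓝 (1 : Γ) :=
        (isOpen_compl_singleton).mem_nhds (by simpa using (Ne.symm hg))
      obtain ⟨n, hn⟩ := hUbasis _ hgc
      have hgU : g ∉ U n := fun h => (hn h) rfl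
      by_contra hcon
      push_neg at hcon
      have : d 1 g < (1 / 2 : ℝ) ^ (n + 1) := by
        have : d 1 g = 0 := le_antisymm hcon (hd_nonneg _ _)
        rw [this]; positivity
      exact hgU (by simpa using hd_sep n 1 g (by simpa using this))
    calc 0 < min (d 1 g) t := lt_min hd_pos ht
      _ ≤ φ g := hφ_lower g
  -- merging
  have hcount : ∀ l : List Γ,
      (∀ (l₁ l₂ : List Γ) (a b : Γ), l = l₁ ++ a :: b :: l₂ → ¬(c a < t / 2 ∧ c b < t / 2)) →
      (l.length : ℝ) ≤ (4 / t) * cost l + 1 := by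
    have key : ∀ n : ℕ, ∀ l : List Γ, l.length ≤ n →
        (∀ (l₁ l₂ : List Γ) (a b : Γ), l = l₁ ++ a :: b :: l₂ → ¬(c a < t / 2 ∧ c b < t / 2)) →
        (l.length : ℝ) ≤ (4 / t) * cost l + 1 := by
      intro n
      induction n with
      | zero =>
        intro l hl _
        have : l = [] := List.length_eq_zero_iff.1 (Nat.le_zero.1 hl)
        subst this
        simp [hcostdef]
      | succ n ih =>
        intro l hl hgood
        match l with
        | [] => simp [hcostdef]
        | [a] =>
          have h1 : (0:ℝ) ≤ (4 / t) * c a := by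
            have := hc_nonneg a
            positivity
          have h2 : cost [a] = c a := by simp [hcostdef]
          simp only [List.length_singleton, h2]
          push_cast
          linarith
        | a :: b :: rest =>
          have hab : ¬(c a < t / 2 ∧ c b < t / 2) := hgood [] rest a b rfl
          have hsum : t / 2 ≤ c a + c b := by
            rcases not_and_or.1 hab with h | h
            · push_neg at h
              have := hc_nonneg b
              linarith
            · push_neg at h
              have := hc_nonneg a
              linarith
          have hrest_good : ∀ (l₁ l₂ : List Γ) (a' b' : Γ),
              rest = l₁ ++ a' :: b' :: l₂ → ¬(c a' < t / 2 ∧ c b' < t / 2) := by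
            intro l₁ l₂ a' b' heq
            exact hgood (a :: b :: l₁) l₂ a' b' (by rw [heq]; simp)
          have hlen : rest.length ≤ n := by
            simp only [List.length_cons] at hl
            omega
          have ihrest := ih rest hlen hrest_good
          have h4t : (0:ℝ) < 4 / t := by positivity
          have h2 : (2:ℝ) ≤ (4 / t) * (c a + c b) := by
            have heq : (4 / t) * (t / 2) = 2 := by
              field_simp
              norm_num
            calc (2:ℝ) = (4 / t) * (t / 2) := heq.symm
              _ ≤ (4 / t) * (c a + c b) := mul_le_mul_of_nonneg_left hsum h4t.le
          rw [hcost_cons, hcost_cons]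
          simp only [List.length_cons]
          push_cast
          have hexp : (4 / t) * (c a + (c b + cost rest))
              = (4 / t) * (c a + c b) + (4 / t) * cost rest := by ring
          rw [hexp]
          linarith
    exact fun l hgood => key l.length l le_rfl hgood
  have hgoodK : ∀ a b : Γ, c a < t / 2 → c b < t / 2 → a * b ∈ K := by
    intro a b hca hcb
    have hda : d 1 a < t / 2 := by
      rw [hc_lt_d a (by linarith)] ; exact hca
    have hdb : d 1 b < t / 2 := by
      rw [hc_lt_d b (by linarith)] ; exact hcb
    have : d 1 (a * b) < t := by
      have := hd1_mul a b
      linarith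
    exact hsmallK _ (this.trans htm)
  have hmerge : ∀ l : List Γ, (∀ u ∈ l, u ∈ K) → ∃ l' : List Γ,
      (∀ u ∈ l', u ∈ K) ∧ l'.prod = l.prod ∧ cost l' ≤ cost l ∧
      (l'.length : ℝ) ≤ (4 / t) * cost l' + 1 := by
    have key : ∀ n : ℕ, ∀ l : List Γ, l.length ≤ n → (∀ u ∈ l, u ∈ K) → ∃ l' : List Γ,
        (∀ u ∈ l', u ∈ K) ∧ l'.prod = l.prod ∧ cost l' ≤ cost l ∧
        (l'.length : ℝ) ≤ (4 / t) * cost l' + 1 := by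
      intro n
      induction n with
      | zero =>
        intro l hl hmem
        refine ⟨l, hmem, rfl, le_rfl, ?_⟩
        have : l = [] := List.length_eq_zero_iff.1 (Nat.le_zero.1 hl)
        subst this
        simp [hcostdef]
      | succ n ih =>
        intro l hl hmem
        by_cases hbad : ∃ (l₁ l₂ : List Γ) (a b : Γ),
            l = l₁ ++ a :: b :: l₂ ∧ c a < t / 2 ∧ c b < t / 2
        · obtain ⟨l₁, l₂, a, b, rfl, hca, hcb⟩ := hbad
          have habK : a * b ∈ K := hgoodK a b hca hcb
          have hmem2 : ∀ u ∈ l₁ ++ (a * b) :: l₂, u ∈ K := by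
            intro u hu
            rcases List.mem_append.1 hu with hu | hu
            · exact hmem u (List.mem_append.2 (Or.inl hu))
            · rcases List.mem_cons.1 hu with rfl | hu
              · exact habK
              · exact hmem u (List.mem_append.2 (Or.inr (by simp [hu])))
          have hlen2 : (l₁ ++ (a * b) :: l₂).length ≤ n := by
            simp only [List.length_append, List.length_cons] at hl ⊢
            omega
          obtain ⟨l', h1, h2, h3, h4⟩ := ih (l₁ ++ (a * b) :: l₂) hlen2 hmem2
          refine ⟨l', h1, ?_, ?_, h4⟩
          · rw [h2]
            simp [List.prod_append, List.prod_cons, mul_assoc]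
          · refine h3.trans ?_
            rw [hcost_append, hcost_append, hcost_cons, hcost_cons, hcost_cons]
            have := hc_mul a b
            linarith
        · push_neg at hbad
          refine ⟨l, hmem, rfl, le_rfl, hcount l ?_⟩
          intro l₁ l₂ a b heq hab
          exact absurd hab.2 (not_lt.2 (hbad l₁ l₂ a b heq hab.1))
    exact fun l hmem => key l.length l le_rfl hmem
  -- word length bound on K via Baire
  have hMbound : ∃ M : ℕ, ∀ g ∈ K, wordLength S g ≤ M := by
    have hNe : Nonempty Γ := ⟨1⟩
    set B : Set Γ := S ∪ S⁻¹ ∪ {1} with hBdef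
    have hB_comp : IsCompact B := (hS.union hS.inv).union isCompact_singleton
    have hP_comp : ∀ n : ℕ, IsCompact (B ^ n) := by
      intro n
      induction n with
      | zero =>
        have : (B ^ 0 : Set Γ) = {1} := by
          rw [pow_zero]
          rfl
        rw [this]
        exact isCompact_singleton
      | succ n ih =>
        rw [pow_succ]
        exact ih.mul hB_comp
    have hP_closed : ∀ n, IsClosed (B ^ n) := fun n => (hP_comp n).isClosed
    have hmemP : ∀ l : List Γ, (∀ x ∈ l, x ∈ B) → l.prod ∈ B ^ l.length := by
      intro l
      induction l with
      | nil =>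
        intro _
        simp only [List.prod_nil, List.length_nil, pow_zero]
        exact Set.mem_one.2 rfl
      | cons a l ih =>
        intro h
        rw [List.prod_cons, List.length_cons, pow_succ']
        exact Set.mul_mem_mul (h a (by simp)) (ih fun x hx => h x (by simp [hx]))
    have hcover : ⋃ n, B ^ n = Set.univ := by
      rw [Set.eq_univ_iff_forall]
      intro g
      obtain ⟨l, -, hmem, hprod⟩ := exists_word hSgen g
      exact Set.mem_iUnion.2 ⟨l.length, hprod ▸ hmemP l (fun x hx => Or.inl (hmem x hx))⟩
    obtain ⟨n₀, g₀, hg₀⟩ := nonempty_interior_of_iUnion_of_closed hP_closed hcover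
    have hℓB : ∀ n : ℕ, ∀ u ∈ B ^ n, wordLength S u ≤ n := by
      intro n
      induction n with
      | zero =>
        intro u hu
        rw [pow_zero, Set.mem_one] at hu
        subst hu
        simp [wordLength_one]
      | succ n ih =>
        intro u hu
        rw [pow_succ] at hu
        obtain ⟨v, hv, b, hb, rfl⟩ := hu
        have h1 : wordLength S b ≤ 1 := by
          rcases hb with hb | hb
          · have := wordLength_le_length (S := S) [b] (by simpa using hb)
            simpa using this
          · rw [Set.mem_singleton_iff] at hb
            subst hb
            simp [wordLength_one]
        calc wordLength S (v * b) ≤ wordLength S v + wordLength S b :=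
            wordLength_mul_le hSgen _ _
          _ ≤ n + 1 := add_le_add (ih v hv) h1
    set W := interior (B ^ n₀) with hWdef
    have hW_open : IsOpen W := isOpen_interior
    have hcov : K ⊆ ⋃ k : Γ, (fun x => g₀ * k⁻¹ * x) ⁻¹' W := by
      intro k hk
      refine Set.mem_iUnion.2 ⟨k, ?_⟩
      simp only [Set.mem_preimage, mul_assoc]
      rw [inv_mul_cancel, mul_one]
      exact hg₀
    obtain ⟨T, hT⟩ := hK_comp.elim_finite_subcover _
      (fun k : Γ => hW_open.preimage (continuous_const.mul continuous_id)) hcov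
    refine ⟨T.sup (fun k => wordLength S k) + n₀ + n₀, ?_⟩
    intro g hg
    obtain ⟨k, hkT, hgk⟩ := Set.mem_iUnion₂.1 (hT hg)
    rw [Set.mem_preimage] at hgk
    have hw : (g₀ * k⁻¹ * g) ∈ B ^ n₀ := interior_subset hgk
    have hdecomp : g = (k * g₀⁻¹) * (g₀ * k⁻¹ * g) := by group
    have h1 : wordLength S g ≤ wordLength S (k * g₀⁻¹) + wordLength S (g₀ * k⁻¹ * g) := by
      conv_lhs => rw [hdecomp]
      exact wordLength_mul_le hSgen _ _
    have h2 : wordLength S (k * g₀⁻¹) ≤ wordLength S k + wordLength S g₀⁻¹ :=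
      wordLength_mul_le hSgen _ _
    have h3 : wordLength S g₀⁻¹ ≤ n₀ :=
      (wordLength_inv_le hSgen g₀).trans (hℓB n₀ g₀ (interior_subset hg₀))
    have h4 : wordLength S k ≤ T.sup (fun k => wordLength S k) :=
      Finset.le_sup hkT
    have h5 : wordLength S (g₀ * k⁻¹ * g) ≤ n₀ := hℓB n₀ _ hw
    omega
  obtain ⟨M, hM⟩ := hMbound
  -- quasi-isometry bounds
  have hQI_upper : ∀ g : Γ, φ g ≤ (wordLength S g : ℝ) := by
    intro g
    obtain ⟨l, hlen, hmem, hprod⟩ := exists_word hSgen g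
    have hcost : cost l ≤ t * l.length := by
      clear hprod hlen
      induction l with
      | nil => simp [hcostdef]
      | cons a l ih =>
        rw [hcost_cons]
        have h1 := hc_le_t a
        have h2 : cost l ≤ t * l.length := ih (fun u hu => hmem u (by simp [hu]))
        push_cast [List.length_cons]
        nlinarith
    calc φ g ≤ cost l := hφ_le g l (fun u hu => hSK (hmem u hu)) hprod
      _ ≤ t * l.length := hcost
      _ ≤ 1 * l.length := by
          have : (0:ℝ) ≤ l.length := by positivity
          nlinarith
      _ = (wordLength S g : ℝ) := by rw [one_mul, hlen]
  have hQI_lower : ∀ g : Γ, (wordLength S g : ℝ) ≤ (M * (4 / t)) * φ g + M := by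
    intro g
    apply le_of_forall_pos_le_add'
    intro ε hε
    set δ : ℝ := min (ε * t / (4 * (M + 1))) 1 with hδdef
    have hδpos : 0 < δ := by
      apply lt_min _ one_pos
      positivity
    obtain ⟨l, ha, hb, hcl⟩ := hφ_eps g δ hδpos
    obtain ⟨l', ha', hb', hc', hlen'⟩ := hmerge l ha
    have hword : wordLength S g ≤ M * l'.length := by
      rw [← hb, ← hb']
      exact wordLength_prod_le hSgen M l' (fun u hu => hM u (ha' u hu))
    have hstep : (wordLength S g : ℝ) ≤ M * ((4 / t) * cost l' + 1) := by
      calc (wordLength S g : ℝ) ≤ (M : ℝ) * l'.length := by exact_mod_cast hword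
        _ ≤ M * ((4 / t) * cost l' + 1) := by
            apply mul_le_mul_of_nonneg_left hlen' (by positivity)
    have hcost2 : cost l' < φ g + δ := lt_of_le_of_lt hc' hcl
    have hδ2 : (M : ℝ) * (4 / t) * δ ≤ ε := by
      have h1 : δ ≤ ε * t / (4 * (M + 1)) := min_le_left _ _
      have hfacpos : (0:ℝ) ≤ ((M:ℝ) + 1) * (4 / t) := by positivity
      have hδt : (0:ℝ) ≤ (4 / t) * δ := by positivity
      have hMle : (M:ℝ) * (4 / t) * δ ≤ ((M:ℝ) + 1) * (4 / t) * δ := by nlinarith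
      have heq : ((M:ℝ) + 1) * (4 / t) * (ε * t / (4 * ((M:ℝ) + 1))) = ε := by
        field_simp
      calc (M : ℝ) * (4 / t) * δ ≤ ((M:ℝ) + 1) * (4 / t) * δ := hMle
        _ ≤ ((M:ℝ) + 1) * (4 / t) * (ε * t / (4 * ((M:ℝ) + 1))) :=
            mul_le_mul_of_nonneg_left h1 hfacpos
        _ = ε := heq
    have hfac : (0:ℝ) ≤ (M:ℝ) * (4 / t) := by positivity
    have hmul : (M:ℝ) * (4 / t) * cost l' ≤ (M:ℝ) * (4 / t) * (φ g + δ) :=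
      mul_le_mul_of_nonneg_left hcost2.le hfac
    have hstep2 : (M:ℝ) * ((4 / t) * cost l' + 1) = (M:ℝ) * (4 / t) * cost l' + M := by ring
    have hmul2 : (M:ℝ) * (4 / t) * (φ g + δ)
        = (M:ℝ) * (4 / t) * φ g + (M:ℝ) * (4 / t) * δ := by ring
    linarith [hstep, hstep2, hmul, hmul2, hδ2]
  -- coarse geodesic chain triangle inequality
  have hchain_tri : ∀ (n : ℕ) (q : Fin (n + 1) → Γ),
      φ ((q 0)⁻¹ * q (Fin.last n)) ≤ ∑ i : Fin n, φ ((q i.castSucc)⁻¹ * q i.succ) := by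
    intro n
    induction n with
    | zero =>
      intro q
      have : (0 : Fin 1) = Fin.last 0 := rfl
      rw [← this]
      simp [hφ_one]
    | succ n ih =>
      intro q
      rw [Fin.sum_univ_castSucc]
      have hq' := ih (fun i => q i.castSucc)
      have h0 : (Fin.castSucc (0 : Fin (n+1))) = (0 : Fin (n+2)) := by
        ext; simp
      rw [h0] at hq'
      have htri : φ ((q 0)⁻¹ * q (Fin.last (n+1)))
          ≤ φ ((q 0)⁻¹ * q ((Fin.last n).castSucc))
            + φ ((q ((Fin.last n).castSucc))⁻¹ * q (Fin.last (n+1))) := by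
        have heq : (q 0)⁻¹ * q (Fin.last (n+1))
            = ((q 0)⁻¹ * q ((Fin.last n).castSucc))
              * ((q ((Fin.last n).castSucc))⁻¹ * q (Fin.last (n+1))) := by group
        rw [heq]
        exact hφ_mul _ _
      have hterm : ∀ i : Fin n, φ ((q i.castSucc.castSucc)⁻¹ * q i.succ.castSucc)
          = φ ((q i.castSucc.castSucc)⁻¹ * q i.castSucc.succ) := by
        intro i
        rw [Fin.succ_castSucc]
      have hlast : (Fin.last n).succ = Fin.last (n + 1) := Fin.succ_last n
      calc φ ((q 0)⁻¹ * q (Fin.last (n+1)))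
          ≤ φ ((q 0)⁻¹ * q ((Fin.last n).castSucc))
            + φ ((q ((Fin.last n).castSucc))⁻¹ * q (Fin.last (n+1))) := htri
        _ ≤ (∑ i : Fin n, φ ((q i.castSucc.castSucc)⁻¹ * q i.succ.castSucc))
            + φ ((q ((Fin.last n).castSucc))⁻¹ * q (Fin.last (n+1))) := by
            exact add_le_add hq' le_rfl
        _ = (∑ i : Fin n, φ ((q i.castSucc.castSucc)⁻¹ * q i.castSucc.succ))
            + φ ((q ((Fin.last n).castSucc))⁻¹ * q ((Fin.last n).succ)) := by
            have hsums : (∑ i : Fin n, φ ((q i.castSucc.castSucc)⁻¹ * q i.succ.castSucc))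
                = ∑ i : Fin n, φ ((q i.castSucc.castSucc)⁻¹ * q i.castSucc.succ) :=
              Finset.sum_congr rfl fun i _ => hterm i
            rw [hlast, hsums]
  -- main coarse geodesic statement
  have hgeo : CoarseGeodesicDist ρ := by
    refine ⟨t, ht.le, ?_⟩
    intro x y
    set g : Γ := x⁻¹ * y with hgdef
    set N : ℕ := ⌈(4 / t) * (φ g + 1) + 1⌉₊ with hNdef
    have hpad : ∀ l : List Γ, (∀ u ∈ l, u ∈ K) → l.length ≤ N →
        ∃ l'' : List Γ, (∀ u ∈ l'', u ∈ K) ∧ l''.prod = l.prod ∧ cost l'' = cost l ∧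
          l''.length = N := by
      intro l hmem hlen
      refine ⟨l ++ List.replicate (N - l.length) 1, ?_, ?_, ?_, ?_⟩
      · intro u hu
        rcases List.mem_append.1 hu with hu | hu
        · exact hmem u hu
        · rw [List.eq_of_mem_replicate hu]
          exact h1K
      · rw [List.prod_append, List.prod_replicate, one_pow, mul_one]
      · rw [hcost_append]
        have hz : cost (List.replicate (N - l.length) 1) = 0 := by
          simp [hcostdef, List.map_replicate, hc_one]
        rw [hz, add_zero]
      · rw [List.length_append, List.length_replicate]
        omega
    have hNbig : (4 / t) * (φ g + 1) + 1 ≤ (N : ℝ) := Nat.le_ceil _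
    set A : Set (Fin N → Γ) := {v | (∀ i, v i ∈ K) ∧ (List.ofFn v).prod = g} with hAdef
    have hprod_cont : ∀ n : ℕ, Continuous (fun v : Fin n → Γ => (List.ofFn v).prod) := by
      intro n
      induction n with
      | zero =>
        simp only [List.ofFn_zero, List.prod_nil]
        exact continuous_const
      | succ n ih =>
        have heq : (fun v : Fin (n+1) → Γ => (List.ofFn v).prod)
            = fun v => v 0 * (List.ofFn (fun i : Fin n => v i.succ)).prod := by
          funext v
          rw [List.ofFn_succ, List.prod_cons]
        rw [heq]
        exact (continuous_apply 0).mul (ih.comp (continuous_pi fun i => continuous_apply _))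
    have hA_comp : IsCompact A := by
      have h1 : IsCompact {v : Fin N → Γ | ∀ i, v i ∈ K} := by
        have heq : {v : Fin N → Γ | ∀ i, v i ∈ K} = Set.pi Set.univ (fun _ => K) := by
          ext v
          simp [Set.mem_pi]
        rw [heq]
        exact isCompact_univ_pi fun _ => hK_comp
      have h2 : IsClosed {v : Fin N → Γ | (List.ofFn v).prod = g} :=
        isClosed_eq (hprod_cont N) continuous_const
      have heq : A = {v : Fin N → Γ | ∀ i, v i ∈ K} ∩ {v | (List.ofFn v).prod = g} := rfl
      rw [heq]
      exact h1.inter_right h2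
    have hexistsN : ∀ ε : ℝ, 0 < ε → ε ≤ 1 → ∃ v : Fin N → Γ, v ∈ A ∧
        cost (List.ofFn v) < φ g + ε := by
      intro ε hε hε1
      obtain ⟨l, ha, hb, hcl⟩ := hφ_eps g ε hε
      obtain ⟨l', ha', hb', hc', hlen'⟩ := hmerge l ha
      have hcost' : cost l' < φ g + ε := lt_of_le_of_lt hc' hcl
      have hlenN : l'.length ≤ N := by
        have h2 : (4 / t) * cost l' ≤ (4 / t) * (φ g + 1) := by
          apply mul_le_mul_of_nonneg_left _ (by positivity)
          linarith
        have h3 : (l'.length : ℝ) ≤ (N : ℝ) := by linarith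
        exact_mod_cast h3
      obtain ⟨l'', hm'', hp'', hc'', hl''⟩ := hpad l' ha' hlenN
      obtain ⟨v, hv⟩ := list_toFun l'' N hl''
      refine ⟨v, ⟨?_, ?_⟩, ?_⟩
      · intro i
        apply hm''
        rw [← hv]
        exact List.mem_ofFn.2 ⟨i, rfl⟩
      · rw [hv, hp'', hb', hb]
      · rw [hv, hc'']
        linarith
    have hA_ne : A.Nonempty := by
      obtain ⟨v, hvA, -⟩ := hexistsN 1 one_pos le_rfl
      exact ⟨v, hvA⟩
    set F : (Fin N → Γ) → ℝ := fun v => ∑ i, c (v i) with hFdef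
    have hF_cost : ∀ v : Fin N → Γ, F v = cost (List.ofFn v) := by
      intro v
      simp only [hFdef, hcostdef]
      rw [List.map_ofFn, List.sum_ofFn]
      rfl
    have hF_cont : Continuous F :=
      continuous_finset_sum _ fun i _ => hcont_c.comp (continuous_apply i)
    obtain ⟨v₀, hv₀A, hv₀min⟩ := hA_comp.exists_isMinOn hA_ne hF_cont.continuousOn
    have hφ_eq : φ g = F v₀ := by
      refine le_antisymm ?_ ?_
      · rw [hF_cost]
        refine hφ_le g _ (fun u hu => ?_) hv₀A.2
        rw [List.mem_ofFn] at hu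
        obtain ⟨i, rfl⟩ := hu
        exact hv₀A.1 i
      · apply le_of_forall_pos_le_add'
        intro ε hε
        obtain ⟨v, hvA, hvcost⟩ := hexistsN (min ε 1) (lt_min hε one_pos) (min_le_right _ _)
        have h4 : F v₀ ≤ F v := hv₀min hvA
        have h2 : F v < φ g + min ε 1 := by
          rw [hF_cost]
          exact hvcost
        have h3 : min ε 1 ≤ ε := min_le_left _ _
        linarith
    set p : Fin (N+1) → Γ := fun i => x * ((List.ofFn v₀).take i.val).prod with hpdef
    have hlenv : (List.ofFn v₀).length = N := List.length_ofFn
    have hp0 : p 0 = x := by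
      simp [hpdef]
    have hplast : p (Fin.last N) = y := by
      have h1 : ((List.ofFn v₀).take (Fin.last N).val) = List.ofFn v₀ := by
        rw [Fin.val_last]
        exact List.take_of_length_le (le_of_eq hlenv)
      simp only [hpdef]
      rw [h1, hv₀A.2, hgdef, mul_inv_cancel_left]
    have hstep_eq : ∀ i : Fin N, (p i.castSucc)⁻¹ * p i.succ = v₀ i := by
      intro i
      have hidx : (i : ℕ) < (List.ofFn v₀).length := by
        rw [hlenv]
        exact i.isLt
      have h1 : ((List.ofFn v₀).take ((i : ℕ) + 1)).prod
          = ((List.ofFn v₀).take (i : ℕ)).prod * v₀ i := by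
        rw [List.prod_take_succ _ _ hidx]
        congr 1
        simp
      have hc1 : (i.castSucc : ℕ) = (i : ℕ) := rfl
      have hc2 : (i.succ : ℕ) = (i : ℕ) + 1 := rfl
      simp only [hpdef, hc1, hc2]
      rw [h1]
      group
    have hρ_step : ∀ i : Fin N, ρ (p i.castSucc) (p i.succ) = φ (v₀ i) := by
      intro i
      have : ρ (p i.castSucc) (p i.succ) = φ ((p i.castSucc)⁻¹ * p i.succ) := rfl
      rw [this, hstep_eq i]
    refine ⟨N, p, hp0, hplast, ?_, ?_⟩
    · intro i
      rw [hρ_step i]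
      exact (hφ_le_c _ (hv₀A.1 i)).trans (hc_le_t _)
    · have hsum1 : ∑ i : Fin N, ρ (p i.castSucc) (p i.succ) = ∑ i : Fin N, φ (v₀ i) :=
        Finset.sum_congr rfl fun i _ => hρ_step i
      have hρxy : ρ x y = φ g := rfl
      rw [hsum1, hρxy]
      refine le_antisymm ?_ ?_
      · calc ∑ i : Fin N, φ (v₀ i) ≤ ∑ i : Fin N, c (v₀ i) :=
            Finset.sum_le_sum fun i _ => hφ_le_c _ (hv₀A.1 i)
          _ = F v₀ := rfl
          _ = φ g := hφ_eq.symm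
      · have := hchain_tri N p
        rw [hp0, hplast] at this
        calc φ g ≤ ∑ i : Fin N, φ ((p i.castSucc)⁻¹ * p i.succ) := this
          _ = ∑ i : Fin N, φ (v₀ i) := Finset.sum_congr rfl fun i _ => by rw [hstep_eq i]
  -- topology
  have htopo : ∀ s : Set Γ, IsOpen s ↔ ∀ x ∈ s, ∃ ε : ℝ, 0 < ε ∧ ∀ y : Γ, ρ x y < ε → y ∈ s := by
    intro s
    constructor
    · intro hs x hx
      have hsx : s ∈ 𝓝 x := hs.mem_nhds hx
      have hpre : (fun y : Γ => x * y) ⁻¹' s ∈ 𝓝 (1 : Γ) := by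
        apply (continuous_const.mul continuous_id).continuousAt.preimage_mem_nhds
        simpa using hsx
      obtain ⟨n, hn⟩ := hUbasis _ hpre
      refine ⟨min ((1 / 2 : ℝ) ^ (n + 2)) (t / 2), lt_min (by positivity) (by linarith), ?_⟩
      intro y hy
      have hρt : ρ x y < t := lt_of_lt_of_le hy ((min_le_right _ _).trans (by linarith))
      have hlow : min (d 1 (x⁻¹ * y)) t ≤ ρ x y := hφ_lower _
      have hdxy : d 1 (x⁻¹ * y) < (1 / 2 : ℝ) ^ (n + 2) := by
        rcases min_cases (d 1 (x⁻¹ * y)) t with ⟨h1, h2⟩ | ⟨h1, h2⟩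
        · rw [h1] at hlow
          exact lt_of_le_of_lt hlow (lt_of_lt_of_le hy (min_le_left _ _))
        · rw [h1] at hlow
          linarith
      have hU' : x⁻¹ * y ∈ U (n + 1) := by
        have := hd_sep (n + 1) 1 (x⁻¹ * y) (by simpa using hdxy)
        simpa using this
      have : x⁻¹ * y ∈ U n := hUanti (Nat.le_succ n) hU'
      have := hn this
      simpa [Set.mem_preimage, mul_assoc] using this
    · intro h
      rw [isOpen_iff_mem_nhds]
      intro x hx
      obtain ⟨ε, hε, hball⟩ := h x hx
      obtain ⟨kk, hkk⟩ := exists_pow_lt_of_lt_one hε (by norm_num : (1 / 2 : ℝ) < 1)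
      set n : ℕ := max m kk with hndef
      have hsub : {y : Γ | x⁻¹ * y ∈ U n} ⊆ s := by
        intro y hy
        apply hball
        have hyK : x⁻¹ * y ∈ K := hUmK (hUanti (le_max_left m kk) hy)
        have hd1 : d 1 (x⁻¹ * y) ≤ (1 / 2 : ℝ) ^ n := by
          have := hd_le n 1 (x⁻¹ * y) (by simpa using hy)
          simpa using this
        have hcy : c (x⁻¹ * y) ≤ (1 / 2 : ℝ) ^ n := (min_le_left _ _).trans hd1
        have : ρ x y ≤ (1 / 2 : ℝ) ^ n := (hφ_le_c _ hyK).trans hcy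
        have hpow : (1 / 2 : ℝ) ^ n ≤ (1 / 2 : ℝ) ^ kk :=
          pow_le_pow_of_le_one (by norm_num) (by norm_num) (le_max_right m kk)
        linarith
      exact Filter.mem_of_superset (hmem_nhds x n) hsub
  refine ⟨ρ, ?_, ?_, ?_, ?_, htopo, hgeo, ?_⟩
  · intro x y
    constructor
    · intro h
      by_contra hne
      have : x⁻¹ * y ≠ 1 := fun hc => hne (inv_mul_eq_one.1 hc)
      have := hφ_pos _ this
      rw [hρdef] at h
      simp only at h
      linarith
    · rintro rfl
      simp [hρdef, hφ_one]
  · intro x y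
    simp only [hρdef]
    have : y⁻¹ * x = (x⁻¹ * y)⁻¹ := by group
    rw [this, hφ_inv]
  · intro x y z
    simp only [hρdef]
    have : x⁻¹ * z = (x⁻¹ * y) * (y⁻¹ * z) := by group
    rw [this]
    exact hφ_mul _ _
  · intro g x y
    simp only [hρdef]
    have : (g * x)⁻¹ * (g * y) = x⁻¹ * y := by group
    rw [this]
  · -- quasi-isometry
    refine ⟨max 1 (M * (4 / t)), le_max_left _ _, max 1 M, by positivity, ?_⟩
    intro x y
    set L : ℝ := max 1 (M * (4 / t)) with hLdef
    set C : ℝ := max 1 (M : ℝ) with hCdef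
    have hL1 : 1 ≤ L := le_max_left _ _
    have hLpos : 0 < L := lt_of_lt_of_le one_pos hL1
    constructor
    · have h1 : (wordLength S (x⁻¹ * y) : ℝ) ≤ (M * (4 / t)) * ρ x y + M := hQI_lower _
      have h2 : (M * (4 / t)) * ρ x y ≤ L * ρ x y :=
        mul_le_mul_of_nonneg_right (le_max_right _ _) (hφ_nonneg _)
      have h3 : (M : ℝ) ≤ C := le_max_right _ _
      have h4 : C ≤ L * C := le_mul_of_one_le_left (le_trans zero_le_one (le_max_left _ _)) hL1
      have h5 : (wordLength S (x⁻¹ * y) : ℝ) ≤ L * ρ x y + L * C := by linarith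
      have h6 : (1 / L) * (wordLength S (x⁻¹ * y) : ℝ) ≤ (1 / L) * (L * ρ x y + L * C) :=
        mul_le_mul_of_nonneg_left h5 (by positivity)
      have hLne : L ≠ 0 := ne_of_gt hLpos
      have h7 : (1 / L) * (L * ρ x y + L * C) = ρ x y + C := by
        field_simp
      linarith
    · have h1 : ρ x y ≤ (wordLength S (x⁻¹ * y) : ℝ) := hQI_upper _
      have h2 : (wordLength S (x⁻¹ * y) : ℝ) ≤ L * (wordLength S (x⁻¹ * y) : ℝ) :=
        le_mul_of_one_le_left (by positivity) hL1
      have h3 : (0:ℝ) ≤ C := le_trans zero_le_one (le_max_left _ _)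
      linarith
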